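/- Let n be a nonnegative integer, μ a partition, and r the number of semistandard Young tableaux of shape μ with entries in {1,…,n}. Then the product over all such tableaux T of the monomials x^{w(T)} equals (x₁x₂⋯xₙ)^q where q = r·|μ|/n; in particular r·|μ| is divisible by n. -/
import Mathlib


open scoped BigOperators
open MvPolynomial

attribute [local instance] Classical.propDecidable

noncomputable section

/-- A partition is encoded as a finitely supported antitone function `ℕ →₀ ℕ`.
The length (number of nonzero parts). -/
def partLen (lam : ℕ →₀ ℕ) : ℕ := lam.support.card

/-- The size `|λ|` of a partition. -/
def partSize (lam : ℕ →₀ ℕ) : ℕ := lam.sum fun _ v => v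

/-- Extend a bounded tuple to a finitely supported function `ℕ →₀ ℕ`. -/
def extFun {N : ℕ} (f : Fin N → Fin N) : ℕ →₀ ℕ :=
  Finsupp.onFinset (Finset.range N) (fun i => if h : i < N then (f ⟨i, h⟩ : ℕ) else 0)
    (fun i hi => Finset.mem_range.mpr (by by_contra h; exact hi (dif_neg h)))

/-- The rectangular partition `(k^n)`: `n` parts all equal to `k`. -/
def rectP (k n : ℕ) : ℕ →₀ ℕ :=
  Finsupp.onFinset (Finset.range n) (fun i => if i < n then k else 0)
    (fun i hi => Finset.mem_range.mpr (by by_contra h; exact hi (if_neg h)))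

/-- The complement `□(k,n,λ) = (k-λₙ, …, k-λ₁)` of `λ` in the `k × n` rectangle. -/
def boxC (k n : ℕ) (lam : ℕ →₀ ℕ) : ℕ →₀ ℕ :=
  Finsupp.onFinset (Finset.range n) (fun i => if i < n then k - lam (n - 1 - i) else 0)
    (fun i hi => Finset.mem_range.mpr (by by_contra h; exact hi (if_neg h)))

/-- The integer sequence `λ + (kⁿ)`: add `k` to each of the first `n` parts. -/
def shiftFun (k : ℤ) (n : ℕ) (lam : ℕ →₀ ℕ) : ℕ → ℤ :=
  fun i => if i < n then (lam i : ℤ) + k else (lam i : ℤ)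

/-- `λ + (kⁿ)` is a partition. -/
def ShiftIsPartition (k : ℤ) (n : ℕ) (lam : ℕ →₀ ℕ) : Prop :=
  Antitone (shiftFun k n lam) ∧ ∀ i, 0 ≤ shiftFun k n lam i

/-- The partition `λ + (kⁿ)` (meaningful when `ShiftIsPartition k n lam`). -/
def shiftPart (k : ℤ) (n : ℕ) (lam : ℕ →₀ ℕ) : ℕ →₀ ℕ :=
  Finsupp.onFinset (lam.support ∪ Finset.range n) (fun i => (shiftFun k n lam i).toNat)
    (fun i hi => by
      by_cases h : i < n
      · exact Finset.mem_union_right _ (Finset.mem_range.mpr h)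
      · refine Finset.mem_union_left _ (Finsupp.mem_support_iff.mpr ?_)
        intro h0
        exact hi (by simp [shiftFun, h, h0]))

/-- The part `λ'_{i+1}` of the conjugate partition: the number of parts of `λ`
that are greater than `i`. -/
def conjPart (lam : ℕ →₀ ℕ) (i : ℕ) : ℕ := (lam.support.filter fun j => i < lam j).card

/-- Elementary symmetric polynomial with an integer index (zero for negative index). -/
def esymZ (n : ℕ) (k : ℤ) : MvPolynomial (Fin n) ℚ :=
  if 0 ≤ k then MvPolynomial.esymm (Fin n) ℚ k.toNat else 0

/-- The Schur polynomial `s_λ(x₁,…,xₙ)`, defined by the dual Jacobi–Trudi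
determinant `det(e_{λ'_i − i + j})`. -/
def schurPoly (n : ℕ) (lam : ℕ →₀ ℕ) : MvPolynomial (Fin n) ℚ :=
  Matrix.det (Matrix.of fun i j : Fin (lam 0) =>
    esymZ n ((conjPart lam (i : ℕ) : ℤ) - ((i : ℕ) : ℤ) + ((j : ℕ) : ℤ)))

/-- `a` is the family of plethysm coefficients: `s_λ[s_μ] = Σ_ν a_{λ,μ}^ν s_ν`.
This is expressed in `n` variables: if `s_μ(x₁,…,xₙ)` is written as a sum of `r`
monomials `x^{m_t}` (with multiplicity), then `s_λ[s_μ](x₁,…,xₙ)` is the Schur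
polynomial `s_λ` in `r` variables evaluated at these `r` monomials. -/
def PlethFamily (a : (ℕ →₀ ℕ) → (ℕ →₀ ℕ) → (ℕ →₀ ℕ) → ℕ) : Prop :=
  ∀ lam mu : ℕ →₀ ℕ, Antitone (fun i => lam i) → Antitone (fun i => mu i) →
    ∀ (n r : ℕ) (mons : Fin r → (Fin n →₀ ℕ)),
      schurPoly n mu = ∑ t : Fin r, MvPolynomial.monomial (mons t) (1 : ℚ) →
      MvPolynomial.aeval
          (fun t : Fin r => (MvPolynomial.monomial (mons t) (1 : ℚ) : MvPolynomial (Fin n) ℚ))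
          (schurPoly r lam) =
        ∑ f : Fin (partSize lam * partSize mu + 1) → Fin (partSize lam * partSize mu + 1),
          if Antitone (fun i => extFun f i) then
            MvPolynomial.C (a lam mu (extFun f) : ℚ) * schurPoly n (extFun f)
          else 0

section Aux

lemma aux_esymm_isHomog (n m : ℕ) :
    MvPolynomial.IsHomogeneous (MvPolynomial.esymm (Fin n) ℚ m) m := by
  rw [MvPolynomial.esymm]
  apply MvPolynomial.IsHomogeneous.sum
  intro t ht
  have := MvPolynomial.IsHomogeneous.prod t (fun i => (MvPolynomial.X i : MvPolynomial (Fin n) ℚ))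
    (fun _ => 1) (fun i _ => MvPolynomial.isHomogeneous_X _ i)
  simpa [(Finset.mem_powersetCard.mp ht).2] using this

lemma aux_esymZ_isHomog (n : ℕ) (k : ℤ) :
    MvPolynomial.IsHomogeneous (esymZ n k) k.toNat := by
  unfold esymZ
  split
  · exact aux_esymm_isHomog n _
  · exact MvPolynomial.isHomogeneous_zero _ _ _

lemma aux_card_filter_fin_lt {m c : ℕ} (h : c ≤ m) :
    (Finset.univ.filter fun i : Fin m => (i : ℕ) < c).card = c := by
  have he : (Finset.univ.filter fun i : Fin m => (i : ℕ) < c) =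
      (Finset.range c).attachFin
        (fun a ha => lt_of_lt_of_le (Finset.mem_range.mp ha) h) := by
    ext i
    simp [Finset.mem_attachFin]
  rw [he, Finset.card_attachFin, Finset.card_range]

lemma aux_sum_conjPart (mu : ℕ →₀ ℕ) (hmu : Antitone fun i => mu i) :
    ∑ i : Fin (mu 0), conjPart mu i = partSize mu := by
  have step1 : ∑ i : Fin (mu 0), conjPart mu i =
      ∑ j ∈ mu.support, ∑ i : Fin (mu 0), if (i : ℕ) < mu j then 1 else 0 := by
    rw [Finset.sum_comm]
    refine Finset.sum_congr rfl fun i _ => ?_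
    rw [conjPart, Finset.card_filter]
  rw [step1]
  have step2 : ∀ j ∈ mu.support,
      (∑ i : Fin (mu 0), if (i : ℕ) < mu j then 1 else 0) = mu j := by
    intro j _
    rw [← Finset.card_filter]
    exact aux_card_filter_fin_lt (hmu (Nat.zero_le j))
  rw [Finset.sum_congr rfl step2]
  rfl

lemma aux_schurPoly_isHomog (n : ℕ) (mu : ℕ →₀ ℕ) (hmu : Antitone fun i => mu i) :
    MvPolynomial.IsHomogeneous (schurPoly n mu) (partSize mu) := by
  rw [schurPoly, Matrix.det_apply']
  apply MvPolynomial.IsHomogeneous.sum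
  intro σ _
  have hcast : ((Equiv.Perm.sign σ : ℤ) : MvPolynomial (Fin n) ℚ) =
      MvPolynomial.C (((Equiv.Perm.sign σ : ℤ) : ℚ)) :=
    (map_intCast (MvPolynomial.C : ℚ →+* MvPolynomial (Fin n) ℚ) _).symm
  rw [hcast]
  apply MvPolynomial.IsHomogeneous.C_mul
  let m := mu 0
  let g : Fin m → ℤ := fun i =>
    (conjPart mu (((σ i : Fin m)) : ℕ) : ℤ) - (((σ i : Fin m) : ℕ) : ℤ) + ((i : ℕ) : ℤ)
  have hg : g = fun i =>
    (conjPart mu (((σ i : Fin m)) : ℕ) : ℤ) - (((σ i : Fin m) : ℕ) : ℤ) + ((i : ℕ) : ℤ) := rfl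
  have hentry : ∀ i : Fin m, (Matrix.of fun i j : Fin m =>
      esymZ n ((conjPart mu (i : ℕ) : ℤ) - ((i : ℕ) : ℤ) + ((j : ℕ) : ℤ))) (σ i) i
      = esymZ n (g i) := fun i => rfl
  by_cases hall : ∀ i : Fin m, (0 : ℤ) ≤ g i
  · have h1 := MvPolynomial.IsHomogeneous.prod Finset.univ
      (fun i : Fin m => esymZ n (g i)) (fun i : Fin m => (g i).toNat)
      (fun i _ => aux_esymZ_isHomog n _)
    have h2 : ∑ i : Fin m, (g i).toNat = partSize mu := by
      have hz : ((∑ i : Fin m, (g i).toNat : ℕ) : ℤ) = ∑ i : Fin m, g i := by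
        push_cast
        exact Finset.sum_congr rfl fun i _ => Int.toNat_of_nonneg (hall i)
      have hsum : ∑ i : Fin m, g i = ∑ i : Fin m, (conjPart mu (i : ℕ) : ℤ) := by
        simp only [hg]
        rw [Finset.sum_add_distrib, Finset.sum_sub_distrib]
        have e1 : ∑ i : Fin m, (conjPart mu ((σ i : Fin m) : ℕ) : ℤ) =
            ∑ i : Fin m, (conjPart mu (i : ℕ) : ℤ) :=
          Equiv.sum_comp σ fun i => (conjPart mu (i : ℕ) : ℤ)
        have e2 : ∑ i : Fin m, (((σ i : Fin m) : ℕ) : ℤ) =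
            ∑ i : Fin m, ((i : ℕ) : ℤ) :=
          Equiv.sum_comp σ fun i : Fin m => ((i : ℕ) : ℤ)
        rw [e1, e2]
        ring
      have hc : ∑ i : Fin m, conjPart mu (i : ℕ) = partSize mu := aux_sum_conjPart mu hmu
      have : ((∑ i : Fin m, (g i).toNat : ℕ) : ℤ) = ((partSize mu : ℕ) : ℤ) := by
        rw [hz, hsum, ← hc]
        push_cast
        rfl
      exact_mod_cast this
    rw [← h2]
    exact h1
  · push_neg at hall
    obtain ⟨i, hi⟩ := hall
    have hz : esymZ n (g i) = 0 := by
      rw [esymZ, if_neg (not_le.mpr hi)]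
    have hp : (∏ i : Fin m, (Matrix.of fun i j : Fin m =>
        esymZ n ((conjPart mu (i : ℕ) : ℤ) - ((i : ℕ) : ℤ) + ((j : ℕ) : ℤ))) (σ i) i) = 0 :=
      Finset.prod_eq_zero (Finset.mem_univ i) hz
    rw [hp]
    exact MvPolynomial.isHomogeneous_zero _ _ _

lemma aux_esymZ_isSymm (n : ℕ) (k : ℤ) (e : Equiv.Perm (Fin n)) :
    MvPolynomial.rename (⇑e) (esymZ n k) = esymZ n k := by
  unfold esymZ
  split
  · exact MvPolynomial.esymm_isSymmetric (Fin n) ℚ _ e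
  · exact map_zero _

lemma aux_schurPoly_isSymmetric (n : ℕ) (mu : ℕ →₀ ℕ) :
    MvPolynomial.IsSymmetric (schurPoly n mu) := by
  intro e
  rw [schurPoly]
  rw [show (MvPolynomial.rename (⇑e) : MvPolynomial (Fin n) ℚ → MvPolynomial (Fin n) ℚ) =
    ⇑((MvPolynomial.rename (⇑e) : MvPolynomial (Fin n) ℚ →ₐ[ℚ] MvPolynomial (Fin n) ℚ)
        : MvPolynomial (Fin n) ℚ →+* MvPolynomial (Fin n) ℚ) from rfl]
  rw [RingHom.map_det]
  refine congrArg Matrix.det (Matrix.ext fun i j => ?_)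
  rw [RingHom.mapMatrix_apply, Matrix.map_apply]
  exact aux_esymZ_isSymm n _ e

end Aux

/-- If `s_μ(x₁,…,xₙ)` is written as the sum of the `r` monomials `x^{w(T)}`,
`T` ranging over semistandard tableaux of shape `μ` with entries in `{1,…,n}`,
then the product of these monomials is `(x₁⋯xₙ)^q` with `q = r·|μ|/n`;
in particular `n` divides `r·|μ|`. -/
theorem product_of_tableau_monomials (mu : ℕ →₀ ℕ) (hmu : Antitone fun i => mu i)
    (n r : ℕ) (mons : Fin r → (Fin n →₀ ℕ))
    (hmons : schurPoly n mu = ∑ t : Fin r, MvPolynomial.monomial (mons t) (1 : ℚ)) :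
    ∃ q : ℕ, q * n = r * partSize mu ∧ ∀ i : Fin n, (∑ t : Fin r, mons t) i = q := by
  classical
  set P := schurPoly n mu with hP
  have hH := aux_schurPoly_isHomog n mu hmu
  have hcoeff : ∀ d : Fin n →₀ ℕ,
      MvPolynomial.coeff d P = ∑ t : Fin r, if mons t = d then (1 : ℚ) else 0 := by
    intro d
    rw [hmons, MvPolynomial.coeff_sum]
    exact Finset.sum_congr rfl fun t _ => MvPolynomial.coeff_monomial d (mons t) 1
  have hmem : ∀ t : Fin r, MvPolynomial.coeff (mons t) P ≠ 0 := by
    intro t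
    rw [hcoeff]
    have hpos : (0 : ℚ) < ∑ s : Fin r, if mons s = mons t then (1 : ℚ) else 0 :=
      Finset.sum_pos' (fun s _ => by split <;> norm_num)
        ⟨t, Finset.mem_univ t, by simp⟩
    exact ne_of_gt hpos
  have hdeg : ∀ t : Fin r, ∑ i : Fin n, mons t i = partSize mu := by
    intro t
    have h1 := hH (hmem t)
    have h2 : (mons t).degree = partSize mu := by
      rw [Finsupp.degree_eq_weight_one]; exact h1
    rw [← h2, Finsupp.degree]
    exact (Finset.sum_subset (Finset.subset_univ _)
      fun i _ hi => Finsupp.notMem_support_iff.mp hi).symm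
  have hsym : ∀ i j : Fin n,
      (∑ d ∈ P.support, (d i : ℚ) * MvPolynomial.coeff d P) =
      ∑ d ∈ P.support, (d j : ℚ) * MvPolynomial.coeff d P := by
    intro i j
    set τ : Equiv.Perm (Fin n) := Equiv.swap i j with hτ
    have hren : MvPolynomial.rename (⇑τ) P = P := aux_schurPoly_isSymmetric n mu τ
    have hcr : ∀ d : Fin n →₀ ℕ,
        MvPolynomial.coeff (Finsupp.mapDomain (⇑τ) d) P = MvPolynomial.coeff d P := by
      intro d
      conv_lhs => rw [← hren]
      exact MvPolynomial.coeff_rename_mapDomain (⇑τ) τ.injective P d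
    have hinv : ∀ d : Fin n →₀ ℕ,
        Finsupp.mapDomain (⇑τ) (Finsupp.mapDomain (⇑τ) d) = d := by
      intro d
      rw [← Finsupp.mapDomain_comp]
      have hid : (⇑τ ∘ ⇑τ) = id := funext fun x => Equiv.swap_apply_self i j x
      rw [hid, Finsupp.mapDomain_id]
    refine Finset.sum_bij' (fun d _ => Finsupp.mapDomain (⇑τ) d)
      (fun d _ => Finsupp.mapDomain (⇑τ) d) ?_ ?_ ?_ ?_ ?_
    · intro d hd
      rw [MvPolynomial.mem_support_iff] at hd ⊢
      rw [hcr d]; exact hd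
    · intro d hd
      rw [MvPolynomial.mem_support_iff] at hd ⊢
      rw [hcr d]; exact hd
    · intro d _; exact hinv d
    · intro d _; exact hinv d
    · intro d _
      have hji : (Finsupp.mapDomain (⇑τ) d) j = d i := by
        have h := Finsupp.mapDomain_equiv_apply (f := τ) d j
        rwa [hτ, Equiv.symm_swap, Equiv.swap_apply_right] at h
      rw [hji, hcr d]
  have hS : ∀ i : Fin n, ((∑ t : Fin r, mons t i : ℕ) : ℚ) =
      ∑ d ∈ P.support, (d i : ℚ) * MvPolynomial.coeff d P := by
    intro i
    have h1 : ∑ d ∈ P.support, (d i : ℚ) * MvPolynomial.coeff d P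
        = ∑ d ∈ P.support, ∑ t : Fin r, if mons t = d then (d i : ℚ) else 0 := by
      refine Finset.sum_congr rfl fun d _ => ?_
      rw [hcoeff d, Finset.mul_sum]
      exact Finset.sum_congr rfl fun t _ => by split <;> simp
    rw [h1, Finset.sum_comm]
    push_cast
    refine Finset.sum_congr rfl fun t _ => ?_
    rw [Finset.sum_ite_eq P.support (mons t) (fun d => (d i : ℚ)),
      if_pos (MvPolynomial.mem_support_iff.mpr (hmem t))]
  have hconst : ∀ i j : Fin n, ∑ t : Fin r, mons t i = ∑ t : Fin r, mons t j := by
    intro i j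
    have h := (hS i).trans ((hsym i j).trans (hS j).symm)
    exact_mod_cast h
  have htot : ∑ i : Fin n, ∑ t : Fin r, mons t i = r * partSize mu := by
    rw [Finset.sum_comm]
    rw [Finset.sum_congr rfl fun t _ => hdeg t]
    simp [Finset.sum_const, Finset.card_univ]
  rcases Nat.eq_zero_or_pos n with hn | hn
  · subst hn
    refine ⟨0, ?_, fun i => absurd i.2 (by omega)⟩
    simpa using htot.symm
  · refine ⟨∑ t : Fin r, mons t ⟨0, hn⟩, ?_, ?_⟩
    · calc (∑ t : Fin r, mons t ⟨0, hn⟩) * n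
          = ∑ i : Fin n, ∑ t : Fin r, mons t i := by
            rw [Finset.sum_congr rfl fun i _ => hconst i ⟨0, hn⟩]
            simp [Finset.sum_const, Finset.card_univ, mul_comm]
        _ = r * partSize mu := htot
    · intro i
      rw [Finset.sum_apply']
      exact hconst i ⟨0, hn⟩
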